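/- The Lie algebra structure of the Hochschild cohomology of the trivial odd Moore algebra (Proposition 4.3, concretized): Let R be a commutative ring and let L be the R-module of pairs (B,A) where B ∈ R[[t]] is an odd power series and A ∈ R[[t]] is an even power series with zero constant coefficient. Then the bracket [(B₁,A₁),(B₂,A₂)] := (B₁·B₂' − B₂·B₁', B₁·A₂' − B₂·A₁') (formal derivatives) is well defined on L (the first component is again odd with zero constant coefficient, the second again even with zero constant coefficient) and makes L a Lie algebra over R, in which the pairs (0,A) form an abelian ideal, the pairs (B,0) form a Lie subalgebra, and [(B,0),(0,A)] = (0, B·A'). (This is the semi-direct sum Lie algebra structure of HH*(R[X]/X²) for the trivial odd Moore algebra, where (B,A) represents the normalised derivation B(t)∂_t + A(t)∂_τ and the bracket [B(t)∂_t, A(t)∂_τ] = B(t)A'(t)∂_τ.) -/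

import Mathlib

open PowerSeries

variable {R : Type*} [CommRing R]

/-- A power series is even if all its odd-degree coefficients vanish. -/
def PowerSeries.IsEven (F : R⟦X⟧) : Prop := ∀ n : ℕ, Odd n → coeff n F = 0

/-- A power series is odd if all its even-degree coefficients vanish. -/
def PowerSeries.IsOdd (F : R⟦X⟧) : Prop := ∀ n : ℕ, Even n → coeff n F = 0

/-- Membership in `L`: pairs `(B,A)` with `B` odd and `A` even with zero constant
coefficient (representing the normalised derivation `B(t)∂_t + A(t)∂_τ`). -/
def InL (p : R⟦X⟧ × R⟦X⟧) : Prop :=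
  p.1.IsOdd ∧ p.2.IsEven ∧ constantCoeff p.2 = 0

/-- The bracket `[(B₁,A₁),(B₂,A₂)] = (B₁B₂' − B₂B₁', B₁A₂' − B₂A₁')` induced by the
commutator of the derivations `B(t)∂_t + A(t)∂_τ`. -/
noncomputable def mooreBracket (p q : R⟦X⟧ × R⟦X⟧) : R⟦X⟧ × R⟦X⟧ :=
  (p.1 * q.1.derivativeFun - q.1 * p.1.derivativeFun,
   p.1 * q.2.derivativeFun - q.1 * p.2.derivativeFun)

/-!
Well-definedness is a parity count: differentiation swaps parity, odd times even is odd, odd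
times odd is even, and an odd series has no constant term. The Lie algebra identities need no
parity at all: they hold for arbitrary pairs, by bilinearity and the Leibniz rule for `d⁄dX`.
-/

namespace PowerSeries

theorem coeff_mul_eq_zero_of_forall {F G : R⟦X⟧} {n : ℕ}
    (h : ∀ i j, i + j = n → coeff i F = 0 ∨ coeff j G = 0) : coeff n (F * G) = 0 := by
  rw [coeff_mul]
  refine Finset.sum_eq_zero fun ij hij => ?_
  rcases h ij.1 ij.2 (Finset.HasAntidiagonal.mem_antidiagonal.mp hij) with hF | hG
  · rw [hF, zero_mul]
  · rw [hG, mul_zero]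

theorem IsOdd.constantCoeff_eq_zero {F : R⟦X⟧} (hF : F.IsOdd) : constantCoeff F = 0 := by
  simpa using hF 0 .zero

theorem IsOdd.sub {F G : R⟦X⟧} (hF : F.IsOdd) (hG : G.IsOdd) : (F - G).IsOdd :=
  fun n hn => by rw [map_sub, hF n hn, hG n hn, sub_zero]

theorem IsEven.sub {F G : R⟦X⟧} (hF : F.IsEven) (hG : G.IsEven) : (F - G).IsEven :=
  fun n hn => by rw [map_sub, hF n hn, hG n hn, sub_zero]

theorem IsOdd.mul_isOdd {F G : R⟦X⟧} (hF : F.IsOdd) (hG : G.IsOdd) : (F * G).IsEven :=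
  fun n hn => coeff_mul_eq_zero_of_forall fun i j hij => by
    rcases Nat.even_or_odd i with hi | hi
    · exact .inl (hF i hi)
    · exact .inr (hG j (by grind))

theorem IsOdd.mul_isEven {F G : R⟦X⟧} (hF : F.IsOdd) (hG : G.IsEven) : (F * G).IsOdd :=
  fun n hn => coeff_mul_eq_zero_of_forall fun i j hij => by
    rcases Nat.even_or_odd i with hi | hi
    · exact .inl (hF i hi)
    · exact .inr (hG j (by grind))

theorem IsOdd.derivative {F : R⟦X⟧} (hF : F.IsOdd) : (d⁄dX R F).IsEven := fun n hn => by
  rw [coeff_derivative, hF (n + 1) hn.add_one, zero_mul]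

theorem IsEven.derivative {F : R⟦X⟧} (hF : F.IsEven) : (d⁄dX R F).IsOdd := fun n hn => by
  rw [coeff_derivative, hF (n + 1) hn.add_one, zero_mul]

end PowerSeries

theorem mooreBracket_eq (p q : R⟦X⟧ × R⟦X⟧) :
    mooreBracket p q =
      (p.1 * d⁄dX R q.1 - q.1 * d⁄dX R p.1, p.1 * d⁄dX R q.2 - q.1 * d⁄dX R p.2) :=
  rfl

theorem InL.mooreBracket {p q : R⟦X⟧ × R⟦X⟧} (hp : InL p) (hq : InL q) :
    InL (mooreBracket p q) := by
  obtain ⟨hB₁, hA₁, -⟩ := hp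
  obtain ⟨hB₂, hA₂, -⟩ := hq
  refine ⟨(hB₁.mul_isEven hB₂.derivative).sub (hB₂.mul_isEven hB₁.derivative),
    (hB₁.mul_isOdd hA₂.derivative).sub (hB₂.mul_isOdd hA₁.derivative), ?_⟩
  simp [mooreBracket_eq, hB₁.constantCoeff_eq_zero, hB₂.constantCoeff_eq_zero]

theorem mooreBracket_add_left (p p' q : R⟦X⟧ × R⟦X⟧) :
    mooreBracket (p + p') q = mooreBracket p q + mooreBracket p' q := by
  simp only [mooreBracket_eq, Prod.fst_add, Prod.snd_add, map_add, Prod.mk_add_mk]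
  congr 1 <;> ring

theorem mooreBracket_add_right (p q q' : R⟦X⟧ × R⟦X⟧) :
    mooreBracket p (q + q') = mooreBracket p q + mooreBracket p q' := by
  simp only [mooreBracket_eq, Prod.fst_add, Prod.snd_add, map_add, Prod.mk_add_mk]
  congr 1 <;> ring

theorem mooreBracket_smul_left (c : R) (p q : R⟦X⟧ × R⟦X⟧) :
    mooreBracket (c • p) q = c • mooreBracket p q := by
  simp only [mooreBracket_eq, Prod.smul_fst, Prod.smul_snd, Derivation.map_smul, Prod.smul_mk,
    smul_mul_assoc, mul_smul_comm, smul_sub]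

theorem mooreBracket_smul_right (c : R) (p q : R⟦X⟧ × R⟦X⟧) :
    mooreBracket p (c • q) = c • mooreBracket p q := by
  simp only [mooreBracket_eq, Prod.smul_fst, Prod.smul_snd, Derivation.map_smul, Prod.smul_mk,
    smul_mul_assoc, mul_smul_comm, smul_sub]

theorem mooreBracket_self (p : R⟦X⟧ × R⟦X⟧) : mooreBracket p p = 0 := by
  simp [mooreBracket_eq]

theorem mooreBracket_jacobi (p q r : R⟦X⟧ × R⟦X⟧) :
    mooreBracket (mooreBracket p q) r + mooreBracket (mooreBracket q r) p +
      mooreBracket (mooreBracket r p) q = 0 := by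
  simp only [mooreBracket_eq, map_sub, Derivation.leibniz, smul_eq_mul, Prod.mk_add_mk,
    Prod.mk_eq_zero]
  constructor <;> ring

theorem mooreBracket_zero_mk_zero_mk (A A' : R⟦X⟧) : mooreBracket (0, A) (0, A') = 0 := by
  simp [mooreBracket_eq]

theorem fst_mooreBracket_zero_mk_right (p : R⟦X⟧ × R⟦X⟧) (A : R⟦X⟧) :
    (mooreBracket p (0, A)).1 = 0 := by
  simp [mooreBracket_eq]

theorem fst_mooreBracket_zero_mk_left (p : R⟦X⟧ × R⟦X⟧) (A : R⟦X⟧) :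
    (mooreBracket (0, A) p).1 = 0 := by
  simp [mooreBracket_eq]

theorem snd_mooreBracket_mk_zero_mk_zero (B B' : R⟦X⟧) :
    (mooreBracket (B, 0) (B', 0)).2 = 0 := by
  simp [mooreBracket_eq]

theorem mooreBracket_mk_zero_zero_mk (B A : R⟦X⟧) :
    mooreBracket (B, 0) (0, A) = (0, B * d⁄dX R A) := by
  simp [mooreBracket_eq]

/-- **The Lie algebra structure of the Hochschild cohomology of the trivial odd Moore
algebra** (Proposition 4.3): the bracket is well defined on `L` and makes `L` a Lie algebra
over `R`, in which the pairs `(0,A)` form an abelian ideal, the pairs `(B,0)` form a Lie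
subalgebra, and `[(B,0),(0,A)] = (0, B·A')`. -/
theorem moore_hochschild_lie_structure (R : Type*) [CommRing R] :
    -- well defined on `L`
    (∀ p q : R⟦X⟧ × R⟦X⟧, InL p → InL q → InL (mooreBracket p q)) ∧
    -- `R`-bilinearity
    (∀ p p' q : R⟦X⟧ × R⟦X⟧, InL p → InL p' → InL q →
      mooreBracket (p + p') q = mooreBracket p q + mooreBracket p' q ∧
      mooreBracket q (p + p') = mooreBracket q p + mooreBracket q p') ∧
    (∀ (c : R) (p q : R⟦X⟧ × R⟦X⟧), InL p → InL q →
      mooreBracket (c • p) q = c • mooreBracket p q ∧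
      mooreBracket p (c • q) = c • mooreBracket p q) ∧
    -- alternating
    (∀ p : R⟦X⟧ × R⟦X⟧, InL p → mooreBracket p p = 0) ∧
    -- Jacobi identity
    (∀ p q r : R⟦X⟧ × R⟦X⟧, InL p → InL q → InL r →
      mooreBracket (mooreBracket p q) r + mooreBracket (mooreBracket q r) p +
        mooreBracket (mooreBracket r p) q = 0) ∧
    -- the pairs `(0,A)` form an abelian ideal
    (∀ A A' : R⟦X⟧, A.IsEven → constantCoeff A = 0 → A'.IsEven → constantCoeff A' = 0 →
      mooreBracket ((0 : R⟦X⟧), A) ((0 : R⟦X⟧), A') = 0) ∧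
    (∀ (p : R⟦X⟧ × R⟦X⟧) (A : R⟦X⟧), InL p → A.IsEven → constantCoeff A = 0 →
      (mooreBracket p ((0 : R⟦X⟧), A)).1 = 0 ∧ (mooreBracket ((0 : R⟦X⟧), A) p).1 = 0) ∧
    -- the pairs `(B,0)` form a Lie subalgebra
    (∀ B B' : R⟦X⟧, B.IsOdd → B'.IsOdd →
      (mooreBracket (B, (0 : R⟦X⟧)) (B', (0 : R⟦X⟧))).2 = 0) ∧
    -- `[(B,0),(0,A)] = (0, B·A')`
    (∀ B A : R⟦X⟧, B.IsOdd → A.IsEven → constantCoeff A = 0 →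
      mooreBracket (B, (0 : R⟦X⟧)) ((0 : R⟦X⟧), A) = ((0 : R⟦X⟧), B * A.derivativeFun)) := by
  refine ⟨fun p q hp hq => hp.mooreBracket hq,
    fun p p' q _ _ _ => ⟨mooreBracket_add_left p p' q, mooreBracket_add_right q p p'⟩,
    fun c p q _ _ => ⟨mooreBracket_smul_left c p q, mooreBracket_smul_right c p q⟩,
    fun p _ => mooreBracket_self p,
    fun p q r _ _ _ => mooreBracket_jacobi p q r,
    fun A A' _ _ _ _ => mooreBracket_zero_mk_zero_mk A A',
    fun p A _ _ _ => ⟨fst_mooreBracket_zero_mk_right p A, fst_mooreBracket_zero_mk_left p A⟩,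
    fun B B' _ _ => snd_mooreBracket_mk_zero_mk_zero B B',
    fun B A _ _ _ => mooreBracket_mk_zero_zero_mk B A⟩
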